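/- arXiv:1211.6372 — 4 statements merged into one kernel-verified Lean document; each statement's English description precedes it below -/
import Mathlib

section
/- Let p be an odd prime. Then the group SL₂(F_p) is (p−1)/2-quasirandom, i.e., every nontrivial complex unitary representation of SL₂(F_p) has dimension at least (p−1)/2. -/
/-!
A nontrivial representation `ρ` cannot kill `u = [[1, 1], [0, 1]]`: the elements
`[[1, x], [0, 1]]` are powers of `u`, their conjugates by the Weyl element are the lower
unipotents, and these together generate `SL₂(𝔽_p)`. As `u ^ p = 1`, the matrix `ρ u ≠ 1` is
diagonalizable (we are in characteristic zero), so it has an eigenvalue `μ ≠ 1`, a primitive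
`p`-th root of unity. Conjugation by `diag(t, t⁻¹)` sends `u` to `u ^ (t²)`, hence every
`μ ^ (t²)` with `t ≠ 0` is an eigenvalue of `ρ u` too, and there are `(p - 1) / 2` distinct
such values.
-/

open MatrixGroups

namespace SL2

variable {R : Type*} [CommRing R]

def upper (x : R) : SL(2, R) := ⟨!![1, x; 0, 1], by simp [Matrix.det_fin_two_of]⟩
def lower (x : R) : SL(2, R) := ⟨!![1, 0; x, 1], by simp [Matrix.det_fin_two_of]⟩
def weyl : SL(2, R) := ⟨!![0, 1; -1, 0], by simp [Matrix.det_fin_two_of]⟩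
def diag (t : Rˣ) : SL(2, R) := ⟨!![(t : R), 0; 0, ↑t⁻¹], by simp [Matrix.det_fin_two_of]⟩

@[simp] lemma coe_upper (x : R) : (upper x : Matrix (Fin 2) (Fin 2) R) = !![1, x; 0, 1] := rfl
@[simp] lemma coe_lower (x : R) : (lower x : Matrix (Fin 2) (Fin 2) R) = !![1, 0; x, 1] := rfl
@[simp] lemma coe_weyl : ((weyl : SL(2, R)) : Matrix (Fin 2) (Fin 2) R) = !![0, 1; -1, 0] := rfl
@[simp] lemma coe_diag (t : Rˣ) :
    (diag t : Matrix (Fin 2) (Fin 2) R) = !![(t : R), 0; 0, ↑t⁻¹] := rfl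

attribute [local simp] Matrix.SpecialLinearGroup.coe_mul Matrix.SpecialLinearGroup.coe_inv
  Matrix.mul_fin_two Matrix.adjugate_fin_two_of Matrix.one_fin_two

lemma upper_add (x y : R) : upper (x + y) = upper x * upper y := by
  ext i j; fin_cases i <;> fin_cases j <;> simp [add_comm]

lemma upper_zero : upper (0 : R) = 1 := by
  ext i j; fin_cases i <;> fin_cases j <;> simp

lemma upper_natCast (n : ℕ) : upper (n : R) = upper 1 ^ n := by
  induction n with
  | zero => ext i j; fin_cases i <;> fin_cases j <;> simp
  | succ n ih => rw [Nat.cast_succ, upper_add, ih, pow_succ]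

lemma weyl_mul_upper_mul_inv (x : R) : weyl * upper x * weyl⁻¹ = lower (-x) := by
  ext i j; fin_cases i <;> fin_cases j <;> simp

lemma diag_mul_upper_mul_inv (t : Rˣ) (x : R) :
    diag t * upper x * (diag t)⁻¹ = upper (t ^ 2 * x) := by
  ext i j; fin_cases i <;> fin_cases j <;> simp; ring

lemma upper_mul_lower_mul_upper {K : Type*} [Field K] (g : SL(2, K)) (hc : g 1 0 ≠ 0) :
    upper ((g 0 0 - 1) / g 1 0) * lower (g 1 0) * upper ((g 1 1 - 1) / g 1 0) = g := by
  have hdet : g 0 0 * g 1 1 - g 0 1 * g 1 0 = 1 := by rw [← Matrix.det_fin_two]; exact g.2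
  ext i j
  fin_cases i <;> fin_cases j <;> simp <;> field_simp <;> first | ring1 | linear_combination hdet

lemma isConj_upper_unit_sq_mul (t : Rˣ) (x : R) : IsConj (upper x) (upper (t ^ 2 * x)) :=
  isConj_iff.2 ⟨diag t, diag_mul_upper_mul_inv t x⟩

theorem eq_one_of_map_upper_eq_one {K G : Type*} [Field K] [Group G] {φ : SL(2, K) →* G}
    (h : ∀ x, φ (upper x) = 1) : φ = 1 := by
  have hlower (x : K) : φ (lower x) = 1 := by
    rw [← neg_neg x, ← weyl_mul_upper_mul_inv, map_mul, map_mul, h, mul_one, map_inv,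
      mul_inv_cancel]
  have hgen (g : SL(2, K)) (hc : g 1 0 ≠ 0) : φ g = 1 := by
    rw [← upper_mul_lower_mul_upper g hc]
    simp [h, hlower]
  ext g
  by_cases hc : g 1 0 = 0
  · have hdet : g 0 0 * g 1 1 = 1 := by
      simpa [hc] using (Matrix.det_fin_two (g : Matrix (Fin 2) (Fin 2) K)).symm.trans g.2
    have hc' : (g * lower 1 : SL(2, K)) 1 0 ≠ 0 := by
      simpa [Matrix.mul_apply, hc] using right_ne_zero_of_mul_eq_one hdet
    simpa [hlower] using hgen _ hc'
  · exact hgen g hc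

lemma upper_eq_upper_one_pow {p : ℕ} [NeZero p] (x : ZMod p) : upper x = upper 1 ^ x.val := by
  rw [← upper_natCast, ZMod.natCast_zmod_val]

end SL2

theorem spectrum_eq_of_isConj {R A : Type*} [CommSemiring R] [Ring A] [Algebra R A] {a b : A}
    (h : IsConj a b) : spectrum R a = spectrum R b := by
  obtain ⟨c, hc⟩ := h
  rw [← spectrum.units_conjugate (u := c), hc.eq, Units.mul_inv_cancel_right]

theorem Matrix.ncard_spectrum_le {n K : Type*} [Fintype n] [DecidableEq n] [Field K]
    (A : Matrix n n K) : (spectrum K A).ncard ≤ Fintype.card n := by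
  classical
  have hroots : spectrum K A = (A.charpoly.roots.toFinset : Set K) := by
    ext μ
    simp [Matrix.mem_spectrum_iff_isRoot_charpoly, A.charpoly_monic.ne_zero]
  rw [hroots, Set.ncard_coe_finset, ← A.charpoly_natDegree_eq_dim]
  exact (Multiset.toFinset_card_le _).trans (Polynomial.card_roots' _)

theorem Module.End.eq_one_of_pow_eq_one_of_forall_hasEigenvalue {K V : Type*} [Field K]
    [IsAlgClosed K] [AddCommGroup V] [Module K V] [FiniteDimensional K V] {f : Module.End K V}
    {n : ℕ} (hn : (n : K) ≠ 0) (hf : f ^ n = 1) (h : ∀ μ, f.HasEigenvalue μ → μ = 1) : f = 1 := by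
  have hss : f.IsSemisimple :=
    isSemisimple_of_squarefree_aeval_eq_zero
      (Polynomial.separable_X_pow_sub_C 1 hn one_ne_zero).squarefree (by simp [hf])
  have htop : f.eigenspace 1 = ⊤ := by
    rw [← hss.iSup_eigenspace_eq_top]
    refine le_antisymm (le_iSup _ 1) (iSup_le fun μ ↦ ?_)
    by_cases hμ : f.HasEigenvalue μ
    · rw [h μ hμ]
    · simp [not_not.1 (Module.End.hasEigenvalue_iff.not.1 hμ)]
  ext v
  simpa using Module.End.mem_eigenspace_iff.1 (htop ▸ Submodule.mem_top : v ∈ f.eigenspace 1)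

theorem Matrix.exists_mem_spectrum_ne_one_of_pow_eq_one {n K : Type*} [Fintype n]
    [DecidableEq n] [Field K] [IsAlgClosed K] {A : Matrix n n K} {m : ℕ} (hm : (m : K) ≠ 0)
    (hA : A ^ m = 1) (hA1 : A ≠ 1) : ∃ μ ∈ spectrum K A, μ ≠ 1 := by
  by_contra! h
  refine hA1 (Matrix.toLinAlgEquiv'.injective ?_)
  rw [map_one]
  refine Module.End.eq_one_of_pow_eq_one_of_forall_hasEigenvalue hm
    (by rw [← map_pow, hA, map_one]) fun μ hμ ↦ h μ ?_
  rwa [Module.End.hasEigenvalue_iff_mem_spectrum, AlgEquiv.spectrum_eq] at hμ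

theorem sub_one_div_two_le_ncard_of_pow_sq_mem {M : Type*} [Monoid M] {p : ℕ} [Fact p.Prime]
    {μ : M} (hμ : orderOf μ = p) {S : Set M} (hS : S.Finite)
    (h : ∀ x : ZMod p, x ≠ 0 → μ ^ (x ^ 2).val ∈ S) : (p - 1) / 2 ≤ S.ncard := by
  classical
  set squares := (Finset.univ : Finset (ZMod p)).image (· ^ 2)
  have hsquares : p ≤ 2 * squares.card := by
    have := FiniteField.card_image_polynomial_eval (R := ZMod p) (p := Polynomial.X ^ 2) (by simp)
    simp only [Polynomial.natDegree_X_pow, Polynomial.eval_pow, Polynomial.eval_X,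
      ZMod.card] at this
    convert this
  have hinj : Function.Injective fun x : ZMod p ↦ μ ^ x.val := fun x y hxy ↦
    ZMod.val_injective p <| pow_injOn_Iio_orderOf (by simp [hμ, ZMod.val_lt])
      (by simp [hμ, ZMod.val_lt]) hxy
  have hsub : ((squares.image fun x ↦ μ ^ x.val : Finset M) : Set M) ⊆ insert 1 S := by
    intro y hy
    obtain ⟨_, hx, rfl⟩ := Finset.mem_image.1 hy
    obtain ⟨x, -, rfl⟩ := Finset.mem_image.1 hx
    by_cases hx0 : x = 0
    · simp [hx0]
    · exact Set.mem_insert_of_mem _ (h x hx0)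
  have := Set.ncard_le_ncard hsub (hS.insert 1)
  rw [Set.ncard_coe_finset, Finset.card_image_of_injective _ hinj] at this
  have := Set.ncard_insert_le 1 S
  omega

theorem stmt1_general (p : ℕ) [Fact p.Prime] :
    ∀ (d : ℕ)
      (ρ : Matrix.SpecialLinearGroup (Fin 2) (ZMod p) →* Matrix.unitaryGroup (Fin d) ℂ),
      ρ ≠ 1 → (p - 1) / 2 ≤ d := by
  intro d ρ hρ
  set A : Matrix (Fin d) (Fin d) ℂ := ↑(ρ (SL2.upper 1))
  have hA1 : A ≠ 1 := fun hA ↦ hρ <| SL2.eq_one_of_map_upper_eq_one fun x ↦ by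
    rw [SL2.upper_eq_upper_one_pow, map_pow, (Subtype.ext hA : ρ (SL2.upper 1) = 1), one_pow]
  have hAp : A ^ p = 1 := by
    rw [← SubmonoidClass.coe_pow, ← map_pow, ← SL2.upper_natCast, ZMod.natCast_self,
      SL2.upper_zero, map_one, OneMemClass.coe_one]
  obtain ⟨μ, hμA, hμ1⟩ := Matrix.exists_mem_spectrum_ne_one_of_pow_eq_one
    (Nat.cast_ne_zero.2 (Fact.out : p.Prime).ne_zero) hAp hA1
  have : Nontrivial (Matrix (Fin d) (Fin d) ℂ) := nontrivial_of_ne A 1 hA1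
  have hμp : μ ^ p = 1 := by simpa [hAp, spectrum.one_eq] using spectrum.pow_mem_pow A p hμA
  have hsq (x : ZMod p) (hx : x ≠ 0) : μ ^ (x ^ 2).val ∈ spectrum ℂ A := by
    have hconj : IsConj A (A ^ (x ^ 2).val) := by
      have := ((Matrix.unitaryGroup (Fin d) ℂ).subtype.comp ρ).map_isConj
        (SL2.isConj_upper_unit_sq_mul (Units.mk0 x hx) 1)
      simpa [SL2.upper_eq_upper_one_pow (x ^ 2)] using this
    rw [spectrum_eq_of_isConj hconj]
    exact spectrum.pow_mem_pow A _ hμA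
  calc (p - 1) / 2 ≤ (spectrum ℂ A).ncard :=
        sub_one_div_two_le_ncard_of_pow_sq_mem (orderOf_eq_prime hμp hμ1) A.finite_spectrum hsq
    _ ≤ d := by simpa using A.ncard_spectrum_le

theorem stmt1 (p : ℕ) [Fact p.Prime] (hp : Odd p) :
    ∀ (d : ℕ)
      (ρ : Matrix.SpecialLinearGroup (Fin 2) (ZMod p) →* Matrix.unitaryGroup (Fin d) ℂ),
      ρ ≠ 1 → (p - 1) / 2 ≤ d :=
  stmt1_general p
end

section
/- For every δ > 0 there exists ε > 0 such that for every finite group G and every A ⊆ G with |A| ≥ δ|G|, there are at least ε|G|² pairs (g,x) ∈ G × G with x ∈ A, xg ∈ A, and gx ∈ A. -/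
/-!
Put `T = {(a, b, c) ∈ G³ | ab ∈ A, aca⁻¹ ∈ A, b⁻¹cb ∈ A}` and let `Γ` be the tripartite graph on
three copies of `G` whose edges are the sides of the triangles indexed by `T`. Since membership in
`T` is a conjunction of one condition per side, every triangle of `Γ` is indexed by `T`. The
triangles `(a, b, ba)` with `ab ∈ A` lie in `T`, are pairwise edge-disjoint and number `|G||A|`,
so by the triangle removal lemma `Γ` has `≳ |G|³` triangles. Finally `(a, b, c) ↦ (b⁻¹ca⁻¹, ab, a)`
is a bijection from `T` onto `S × G`, where `S` is the set of pairs `(g, x)` to be counted.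
-/

open Finset SimpleGraph TripartiteFromTriangles

namespace SimpleGraph.TripartiteFromTriangles

variable {α β γ : Type*} [DecidableEq α] [DecidableEq β] [DecidableEq γ]
  [Fintype α] [Fintype β] [Fintype γ] {s t : Finset (α × β × γ)}

lemma farFromTriangleFree_of_subset [ExplicitDisjoint s] (hst : s ⊆ t) {ε : ℝ}
    (hs : ε * ((Fintype.card α + Fintype.card β + Fintype.card γ) ^ 2 : ℕ) ≤ #s) :
    (graph t).FarFromTriangleFree ε :=
  farFromTriangleFree_of_disjoint_triangles (s.map toTriangle)
    (map_subset_iff_subset_preimage.2 fun _ hx ↦ by simpa using toTriangle_is3Clique (hst hx))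
    (map_toTriangle_disjoint s) <| by simpa [add_assoc] using hs

lemma card_cliqueFinset_le_of_forall_mem
    (ht : ∀ a b c, (∃ c', (a, b, c') ∈ t) → (∃ b', (a, b', c) ∈ t) → (∃ a', (a', b, c) ∈ t) →
      (a, b, c) ∈ t) :
    #((graph t).cliqueFinset 3) ≤ #t := by
  refine card_le_card_of_surjOn toTriangle fun s hs ↦ ?_
  obtain ⟨x, y, z, hxy, hxz, hyz, rfl⟩ := SimpleGraph.is3Clique_iff.1 (mem_cliqueFinset_iff.1 hs)
  obtain ⟨a, b, c, habc, hab, hac, hbc⟩ := graph_triple hxy hxz hyz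
  exact ⟨(a, b, c), ht a b c (Graph.in₀₁_iff.1 hab) (Graph.in₀₂_iff.1 hac)
    (Graph.in₁₂_iff.1 hbc), habc⟩

end SimpleGraph.TripartiteFromTriangles

section DoubleRecurrence

variable {G : Type*} [Group G] [Fintype G] [DecidableEq G] (A : Finset G)

def doubleRecurrences : Finset (G × G) :=
  univ.filter fun q ↦ q.2 ∈ A ∧ q.2 * q.1 ∈ A ∧ q.1 * q.2 ∈ A

def conjTriangleIndices : Finset (G × G × G) :=
  univ.filter fun p ↦ p.1 * p.2.1 ∈ A ∧ p.1 * p.2.2 * p.1⁻¹ ∈ A ∧ p.2.1⁻¹ * p.2.2 * p.2.1 ∈ A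

def diagTriangleIndices : Finset (G × G × G) :=
  (univ.filter fun q : G × G ↦ q.1 * q.2 ∈ A).map
    ⟨fun q ↦ (q.1, q.2, q.2 * q.1), fun _ _ h ↦ by simp_all [Prod.ext_iff]⟩

variable {A}

@[simp]
lemma mk_mem_conjTriangleIndices {a b c : G} :
    (a, b, c) ∈ conjTriangleIndices A ↔ a * b ∈ A ∧ a * c * a⁻¹ ∈ A ∧ b⁻¹ * c * b ∈ A := by
  simp [conjTriangleIndices]

@[simp]
lemma mk_mem_diagTriangleIndices {a b c : G} :
    (a, b, c) ∈ diagTriangleIndices A ↔ a * b ∈ A ∧ c = b * a := by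
  simp only [diagTriangleIndices, Prod.ext_iff, mem_map, mem_filter, mem_univ, true_and,
    Prod.exists, eq_comm]
  refine ⟨?_, fun h ↦ ⟨_, _, h.1, rfl, rfl, h.2⟩⟩
  rintro ⟨_, _, h₁, rfl, rfl, h₂⟩
  exact ⟨h₁, h₂⟩

variable (A)

instance diagTriangleIndices.instExplicitDisjoint : ExplicitDisjoint (diagTriangleIndices A) := by
  constructor <;> simp +contextual

lemma diagTriangleIndices_subset : diagTriangleIndices A ⊆ conjTriangleIndices A := by
  rintro ⟨a, b, c⟩
  simp +contextual [mul_assoc]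

lemma card_diagTriangleIndices : #(diagTriangleIndices A) = Fintype.card G * #A := by
  rw [diagTriangleIndices, card_map, ← card_univ, ← card_product]
  exact card_equiv ((Equiv.refl _).prodShear fun a ↦ Equiv.mulLeft a) (by simp)

lemma card_conjTriangleIndices :
    #(conjTriangleIndices A) = #(doubleRecurrences A) * Fintype.card G := by
  rw [← card_univ, ← card_product]
  refine card_equiv
    { toFun p := ((p.2.1⁻¹ * p.2.2 * p.1⁻¹, p.1 * p.2.1), p.1)
      invFun q := (q.2, q.2⁻¹ * q.1.2, q.2⁻¹ * q.1.2 * q.1.1 * q.2)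
      left_inv p := by simp [mul_assoc]
      right_inv q := by simp [mul_assoc] } fun p ↦ ?_
  simp [doubleRecurrences, conjTriangleIndices, mul_assoc]

lemma card_cliqueFinset_conjTriangleIndices_le :
    #((graph (conjTriangleIndices A)).cliqueFinset 3) ≤ #(doubleRecurrences A) * Fintype.card G :=
  card_conjTriangleIndices A ▸ card_cliqueFinset_le_of_forall_mem <| by
    simp only [mk_mem_conjTriangleIndices]
    rintro a b c ⟨_, hab, -⟩ ⟨_, -, hac, -⟩ ⟨_, -, -, hbc⟩
    exact ⟨hab, hac, hbc⟩

end DoubleRecurrence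

theorem stmt8 (δ : ℝ) (hδ : 0 < δ) :
    ∃ ε : ℝ, 0 < ε ∧
      ∀ (G : Type) [Group G] [Fintype G] [DecidableEq G] (A : Finset G),
        δ * Fintype.card G ≤ A.card →
        ε * (Fintype.card G : ℝ) ^ 2
          ≤ ((Finset.univ.filter (fun q : G × G =>
              q.2 ∈ A ∧ q.2 * q.1 ∈ A ∧ q.1 * q.2 ∈ A)).card : ℝ) := by
  have hbound := triangleRemovalBound_pos (div_pos hδ (by norm_num : (0 : ℝ) < 9))
  refine ⟨triangleRemovalBound (δ / 9) * 27, by positivity, fun G _ _ _ A hA ↦ ?_⟩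
  have hn : (0 : ℝ) < Fintype.card G := mod_cast Fintype.card_pos
  have hfar : (graph (conjTriangleIndices A)).FarFromTriangleFree (δ / 9) :=
    farFromTriangleFree_of_subset (diagTriangleIndices_subset A) <| by
      rw [card_diagTriangleIndices]
      push_cast
      nlinarith
  have hcount : triangleRemovalBound (δ / 9) * 27 * (Fintype.card G : ℝ) ^ 2 * Fintype.card G ≤
      #(doubleRecurrences A) * Fintype.card G := calc
    _ = triangleRemovalBound (δ / 9) * (Fintype.card (G ⊕ G ⊕ G) : ℝ) ^ 3 := by
        simp only [Fintype.card_sum, Nat.cast_add]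
        ring
    _ ≤ #((graph (conjTriangleIndices A)).cliqueFinset 3) := hfar.le_card_cliqueFinset
    _ ≤ (#(doubleRecurrences A) * Fintype.card G : ℕ) :=
      mod_cast card_cliqueFinset_conjTriangleIndices_le A
    _ = _ := Nat.cast_mul _ _
  exact le_of_mul_le_mul_right hcount hn
end

section
/- For every δ > 0 there exist N and ε > 0 such that: if G is a finite group with |G| ≥ N and A ⊆ G satisfies |A| ≥ δ|G|, then there exists a nonidentity g ∈ G with |A ∩ g⁻¹A ∩ Ag⁻¹| ≥ ε|G|. In particular there exist a nonidentity g and x ∈ G with x, xg, gx all in A. -/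
/-!
Build the tripartite graph on three copies of `G` whose explicit triangles are
`(a, a * x, a * x * a⁻¹)` for `a ∈ G`, `x ∈ A`. These `|G| |A|` triangles are edge-disjoint, so the
graph is `δ / 9`-far from triangle-free and the triangle removal lemma yields `≫ |G|³` triangles.
Any triangle `(a, b, c)` gives `x = a⁻¹ * b` and `g = b⁻¹ * c * a` with `x, g * x, x * g ∈ A`, and
`(a, g, x)` determines the triangle, so `∑ g, |A ∩ g⁻¹A ∩ Ag⁻¹| ≫ |G|²`. The term `g = 1` is at
most `|G|`, hence some `g ≠ 1` contributes `≫ |G|`.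
-/

open Finset SimpleGraph TripartiteFromTriangles

lemma Finset.exists_ne_lt_of_add_card_mul_lt_sum {ι : Type*} [Fintype ι] [DecidableEq ι]
    {f : ι → ℝ} {c : ℝ} (i₀ : ι) (hf : f i₀ + Fintype.card ι * c < ∑ i, f i) (hc : 0 ≤ c) :
    ∃ i ≠ i₀, c < f i := by
  by_contra! h
  have hrest : ∑ i ∈ univ.erase i₀, f i ≤ Fintype.card ι * c :=
    calc ∑ i ∈ univ.erase i₀, f i ≤ #(univ.erase i₀) • c :=
          sum_le_card_nsmul _ _ _ fun i hi ↦ h i (ne_of_mem_erase hi)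
      _ ≤ Fintype.card ι * c := by
          rw [nsmul_eq_mul]
          gcongr
          exact_mod_cast card_erase_le
  rw [← add_sum_erase _ _ (mem_univ i₀)] at hf
  linarith

namespace NonabelianRoth

variable {G : Type*} [Group G] [Fintype G] [DecidableEq G] {A : Finset G} {a b c : G}

/-- `A ∩ g⁻¹A ∩ Ag⁻¹`. -/
def shiftInter (A : Finset G) (g : G) : Finset G := {x ∈ A | g * x ∈ A ∧ x * g ∈ A}

def triangleIndices (A : Finset G) : Finset (G × G × G) :=
  (univ ×ˢ A).image fun (a, x) ↦ (a, a * x, a * x * a⁻¹)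

@[simp]
lemma mk_mem_triangleIndices : (a, b, c) ∈ triangleIndices A ↔ a⁻¹ * b ∈ A ∧ c = b * a⁻¹ := by
  simp only [triangleIndices, mem_image, mem_product, mem_univ, true_and, Prod.exists,
    Prod.mk.injEq]
  constructor
  · rintro ⟨a, x, hx, rfl, rfl, rfl⟩
    simpa [mul_assoc] using hx
  · rintro ⟨hx, rfl⟩
    exact ⟨a, a⁻¹ * b, hx, rfl, by group, by group⟩

lemma card_triangleIndices : #(triangleIndices A) = Fintype.card G * #A := by
  rw [triangleIndices, card_image_of_injective, card_product, card_univ]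
  rintro ⟨a, x⟩ ⟨a', x'⟩ h
  simp only [Prod.mk.injEq] at h
  obtain ⟨rfl, h, -⟩ := h
  rw [mul_left_cancel h]

instance : ExplicitDisjoint (triangleIndices A) := by
  constructor <;> simp +contextual

lemma conj_mem_of_mk_mem_triangleIndices_left (h : (a, b, c) ∈ triangleIndices A) :
    a⁻¹ * c * a ∈ A := by
  obtain ⟨hb, rfl⟩ := mk_mem_triangleIndices.1 h
  convert hb using 1
  group

lemma conj_mem_of_mk_mem_triangleIndices_right (h : (a, b, c) ∈ triangleIndices A) :
    b⁻¹ * c * b ∈ A := by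
  obtain ⟨hb, rfl⟩ := mk_mem_triangleIndices.1 h
  convert hb using 1
  group

lemma cliqueFinset_subset_image :
    (graph (triangleIndices A)).cliqueFinset 3 ⊆
      (univ ×ˢ univ.sigma (shiftInter A)).image
        fun (a, ⟨g, x⟩) ↦ toTriangle (a, a * x, a * x * g * a⁻¹) := by
  intro s hs
  rw [mem_cliqueFinset_iff, SimpleGraph.is3Clique_iff] at hs
  obtain ⟨x, y, z, hxy, hxz, hyz, rfl⟩ := hs
  obtain ⟨a, b, c, habc, hab, hac, hbc⟩ := graph_triple hxy hxz hyz
  obtain ⟨_, hab⟩ := Graph.in₀₁_iff.1 hab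
  obtain ⟨_, hac⟩ := Graph.in₀₂_iff.1 hac
  obtain ⟨_, hbc⟩ := Graph.in₁₂_iff.1 hbc
  rw [mem_image]
  refine ⟨(a, ⟨b⁻¹ * c * a, a⁻¹ * b⟩), ?_, ?_⟩
  · have hgx := conj_mem_of_mk_mem_triangleIndices_right hbc
    have hxg := conj_mem_of_mk_mem_triangleIndices_left hac
    simp only [mul_assoc] at hgx hxg
    simpa [shiftInter, mul_assoc] using ⟨(mk_mem_triangleIndices.1 hab).1, hgx, hxg⟩
  · simpa [mul_assoc] using habc

lemma card_cliqueFinset_le :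
    #((graph (triangleIndices A)).cliqueFinset 3) ≤ Fintype.card G * ∑ g, #(shiftInter A g) :=
  (card_le_card cliqueFinset_subset_image).trans <| card_image_le.trans_eq <| by
    rw [card_product, card_univ, card_sigma]

lemma farFromTriangleFree_graph {δ : ℝ} (hA : δ * Fintype.card G ≤ #A) :
    (graph (triangleIndices A)).FarFromTriangleFree (δ / 9) := by
  refine farFromTriangleFree _ ?_
  rw [card_triangleIndices]
  push_cast
  calc δ / 9 * ((Fintype.card G : ℝ) + Fintype.card G + Fintype.card G) ^ 2
      = δ * Fintype.card G * Fintype.card G := by ring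
    _ ≤ #A * Fintype.card G := by gcongr
    _ = Fintype.card G * #A := mul_comm _ _

lemma triangleRemovalBound_mul_le_sum_card_shiftInter {δ : ℝ} (hA : δ * Fintype.card G ≤ #A) :
    27 * triangleRemovalBound (δ / 9) * Fintype.card G ^ 2 ≤ ∑ g, (#(shiftInter A g) : ℝ) := by
  have hcube := (farFromTriangleFree_graph hA).le_card_cliqueFinset
  have hcard : Fintype.card (G ⊕ G ⊕ G) = 3 * Fintype.card G := by simp; ring
  have hn : (0 : ℝ) < Fintype.card G := by exact_mod_cast Fintype.card_pos
  refine le_of_mul_le_mul_left ?_ hn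
  calc (Fintype.card G : ℝ) * (27 * triangleRemovalBound (δ / 9) * Fintype.card G ^ 2)
      = triangleRemovalBound (δ / 9) * (Fintype.card (G ⊕ G ⊕ G) : ℝ) ^ 3 := by
        rw [hcard]; push_cast; ring
    _ ≤ (#((graph (triangleIndices A)).cliqueFinset 3) : ℝ) := hcube
    _ ≤ Fintype.card G * ∑ g, (#(shiftInter A g) : ℝ) := by exact_mod_cast card_cliqueFinset_le

end NonabelianRoth

open NonabelianRoth

theorem stmt9 (δ : ℝ) (hδ : 0 < δ) :
    ∃ (N : ℕ) (ε : ℝ), 0 < ε ∧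
      ∀ (G : Type) [Group G] [Fintype G] [DecidableEq G],
        N ≤ Fintype.card G →
        ∀ A : Finset G, δ * Fintype.card G ≤ A.card →
          ∃ g : G, g ≠ 1 ∧
            ε * (Fintype.card G : ℝ)
              ≤ ((A.filter (fun x => g * x ∈ A ∧ x * g ∈ A)).card : ℝ) ∧
            ∃ x : G, x ∈ A ∧ x * g ∈ A ∧ g * x ∈ A := by
  set β := triangleRemovalBound (δ / 9)
  have hβ : 0 < β := triangleRemovalBound_pos (by positivity)
  refine ⟨⌈β⁻¹⌉₊, β, hβ, fun G _ _ _ hG A hA ↦ ?_⟩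
  have hβn : 1 ≤ β * Fintype.card G := by
    rwa [Nat.ceil_le, inv_le_iff_one_le_mul₀' hβ] at hG
  have hsum : #(shiftInter A 1) + Fintype.card G * (β * Fintype.card G) <
      ∑ g, (#(shiftInter A g) : ℝ) := by
    have h₁ : (#(shiftInter A 1) : ℝ) ≤ Fintype.card G := by exact_mod_cast card_le_univ _
    nlinarith [triangleRemovalBound_mul_le_sum_card_shiftInter hA]
  obtain ⟨g, hg, hgA⟩ := exists_ne_lt_of_add_card_mul_lt_sum
    (f := fun g ↦ (#(shiftInter A g) : ℝ)) 1 hsum (by positivity)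
  obtain ⟨x, hx⟩ := card_pos.1 (by exact_mod_cast (zero_lt_one.trans_le hβn).trans hgA)
  obtain ⟨hxA, hgx, hxg⟩ := mem_filter.1 hx
  exact ⟨g, hg, hgA.le, x, hxA, hxg, hgx⟩
end

section
/- Let G be a finite group, F a field, and ρ : G → GL_d(F) a linear representation with F = ℂ. Suppose G is perfect (G = [G,G]) and has no proper normal subgroup of index less than m. Then every nontrivial unitary representation of G has dimension greater than (1/2)√(log m) (i.e., G is (√(log m)/2)-quasirandom). -/
/-!
Let `f : G →* unitary A` be a unitary representation of a finite group in a C⋆-algebra, e.g.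
`A = Mₙ(ℂ)` with the operator norm. Two elements `u, v` of `f G` within `2/5` of `1` commute:
otherwise take such a non-commuting pair with `‖u - 1‖` minimal; since `‖⁅u, v⁆ - 1‖ ≤ 2‖u - 1‖‖v - 1‖`,
the commutator `w = ⁅u, v⁆` is closer to `1` than `u`, so it commutes with `v`. Then
`wʲ = ⁅u, vʲ⁆` stays within `8/5 < √3` of `1`, which forces `w = 1` because a unitary `w ≠ 1` has
an eigenvalue `λ ≠ 1` of modulus one, and some power of `λ` lies at distance `≥ √3` from `1`.

Hence the normal subgroup `N` generated by the elements mapped within `2/5` of `1` has abelian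
image, and its cosets are mapped to `2/5`-separated points of the unit ball of `A`, so
`[G : N] ≤ 6 ^ dim_ℝ A` by a volume argument. For a perfect group and a nontrivial `f`, `N` is
proper, so `m ≤ [G : N] ≤ 6 ^ (2d²) < exp (4d²)`.
-/

open MeasureTheory Metric Module Real
open scoped ENNReal commutatorElement

lemma exists_nat_mul_mem_Icc {a b t : ℝ} (ha : 0 ≤ a) (ht : 0 < t) (htab : t ≤ b - a) :
    ∃ j : ℕ, j * t ∈ Set.Icc a b := by
  refine ⟨⌈a / t⌉₊, (div_le_iff₀ ht).mp (Nat.le_ceil _), ?_⟩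
  have := mul_lt_mul_of_pos_right (Nat.ceil_lt_add_one (div_nonneg ha ht.le)) ht
  rw [add_mul, one_mul, div_mul_cancel₀ _ ht.ne'] at this
  linarith

lemma Real.cos_le_neg_half_of_mem_Icc {s : ℝ} (hs : s ∈ Set.Icc (2 * π / 3) (4 * π / 3)) :
    cos s ≤ -1 / 2 := by
  have hπs : |s - π| ≤ π / 3 := abs_le.mpr ⟨by linarith [hs.1], by linarith [hs.2]⟩
  have : cos (π / 3) ≤ cos |s - π| :=
    cos_le_cos_of_nonneg_of_le_pi (abs_nonneg _) (by linarith [pi_pos]) hπs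
  rw [cos_abs, cos_sub_pi, cos_pi_div_three] at this
  linarith

lemma Complex.exists_pow_re_le_neg_half {z : ℂ} (hz : ‖z‖ = 1) (hz1 : z ≠ 1) :
    ∃ j : ℕ, (z ^ j).re ≤ -1 / 2 := by
  have hz_exp : z = exp (z.arg * I) := by
    simpa [hz] using (norm_mul_exp_arg_mul_I z).symm
  have harg : z.arg ≠ 0 := fun h => hz1 (by simpa [h] using hz_exp)
  have hre (j : ℕ) : (z ^ j).re = Real.cos (j * |z.arg|) := by
    rw [← Nat.abs_cast j, ← abs_mul, Real.cos_abs]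
    conv_lhs => rw [hz_exp, ← exp_nat_mul, ← mul_assoc]
    exact_mod_cast exp_ofReal_mul_I_re (j * z.arg)
  obtain ⟨j, hj⟩ : ∃ j : ℕ, j * |z.arg| ∈ Set.Icc (2 * π / 3) (4 * π / 3) := by
    rcases le_or_gt (2 * π / 3) |z.arg| with h | h
    · exact ⟨1, by simpa using h, by linarith [abs_arg_le_pi z, pi_pos]⟩
    · exact exists_nat_mul_mem_Icc (by positivity) (abs_pos.mpr harg) (by linarith)
  exact ⟨j, hre j ▸ Real.cos_le_neg_half_of_mem_Icc hj⟩

lemma commutatorElement_pow_right_of_commute {G : Type*} [Group G] {x y : G}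
    (h : Commute ⁅x, y⁆ y) (n : ℕ) : ⁅x, y ^ n⁆ = ⁅x, y⁆ ^ n := by
  have hxy : SemiconjBy x y (⁅x, y⁆ * y) := by
    rw [SemiconjBy, commutatorElement_def]; group
  have hxyn : x * y ^ n = ⁅x, y⁆ ^ n * y ^ n * x := by
    rw [(hxy.pow_right n).eq, h.mul_pow]
  rw [commutatorElement_def, hxyn]; group

theorem card_le_of_norm_le_one_of_separated {E : Type*} [NormedAddCommGroup E]
    [NormedSpace ℝ E] [FiniteDimensional ℝ E] {ι : Type*} [Fintype ι] {f : ι → E} {δ : ℝ}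
    (hδ : 0 < δ) (hf : ∀ i, ‖f i‖ ≤ 1) (hsep : Pairwise fun i j => δ ≤ dist (f i) (f j)) :
    (Fintype.card ι : ℝ) ≤ (1 + 2 / δ) ^ finrank ℝ E := by
  borelize E
  set μ : Measure E := Measure.addHaar
  have hdisj : Pairwise (Function.onFun Disjoint fun i => ball (f i) (δ / 2)) := fun i j hij =>
    ball_disjoint_ball (by linarith [hsep hij])
  have hsub : (⋃ i, ball (f i) (δ / 2)) ⊆ ball 0 (1 + δ / 2) := Set.iUnion_subset fun i =>
    ball_subset_ball' (by rw [dist_zero_right]; linarith [hf i])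
  have hvol : (Fintype.card ι : ℝ≥0∞) * ENNReal.ofReal ((δ / 2) ^ finrank ℝ E) * μ (ball 0 1) ≤
      ENNReal.ofReal ((1 + δ / 2) ^ finrank ℝ E) * μ (ball 0 1) := by
    calc _ = μ (⋃ i, ball (f i) (δ / 2)) := by
          rw [measure_iUnion hdisj fun _ => measurableSet_ball, tsum_fintype]
          simp [μ.addHaar_ball_of_pos _ (half_pos hδ), mul_assoc]
    _ ≤ μ (ball 0 (1 + δ / 2)) := measure_mono hsub
    _ = _ := μ.addHaar_ball_of_pos _ (by positivity)
  have := ENNReal.toReal_le_of_le_ofReal (by positivity)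
    ((ENNReal.mul_le_mul_iff_left (measure_ball_pos μ _ one_pos).ne' measure_ball_lt_top.ne).1 hvol)
  rw [ENNReal.toReal_mul, ENNReal.toReal_ofReal (by positivity), ENNReal.toReal_natCast,
    ← le_div_iff₀ (by positivity), ← div_pow] at this
  rwa [show (1 + δ / 2) / (δ / 2) = 1 + 2 / δ by field_simp; ring] at this

namespace Unitary

variable {A : Type*} [CStarAlgebra A]

lemma dist_mul_left (w u v : unitary A) : dist (w * u) (w * v) = dist u v := by
  simp only [Subtype.dist_eq, dist_eq_norm, Submonoid.coe_mul, ← mul_sub,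
    CStarRing.norm_coe_unitary_mul]

lemma dist_mul_right (w u v : unitary A) : dist (u * w) (v * w) = dist u v := by
  simp only [Subtype.dist_eq, dist_eq_norm, Submonoid.coe_mul, ← sub_mul,
    CStarRing.norm_mul_coe_unitary]

lemma dist_one_eq_norm (u : unitary A) : dist u 1 = ‖(u : A) - 1‖ := by
  rw [Subtype.dist_eq, dist_eq_norm]; rfl

lemma dist_one_le_two (u : unitary A) : dist u 1 ≤ 2 := by
  rcases subsingleton_or_nontrivial A
  · simp [Subtype.dist_eq, Subsingleton.elim (u : A) 1]
  · rw [dist_one_eq_norm]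
    calc ‖(u : A) - 1‖ ≤ ‖(u : A)‖ + ‖(1 : A)‖ := norm_sub_le _ _
    _ = 2 := by rw [CStarRing.norm_coe_unitary, norm_one]; norm_num

lemma dist_conj_one (g u : unitary A) : dist (g * u * g⁻¹) 1 = dist u 1 := by
  calc dist (g * u * g⁻¹) 1 = dist (g * u * g⁻¹) (g * 1 * g⁻¹) := by group
  _ = dist u 1 := by rw [dist_mul_right, dist_mul_left]

lemma dist_inv_mul_one (u v : unitary A) : dist (u⁻¹ * v) 1 = dist v u := by
  rw [← inv_mul_cancel u, dist_mul_left]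

lemma dist_commutatorElement_one_le (u v : unitary A) :
    dist ⁅u, v⁆ 1 ≤ 2 * dist u 1 * dist v 1 := by
  have hdist : dist ⁅u, v⁆ 1 = dist (u * v) (v * u) := by
    rw [← dist_mul_right (v * u), one_mul, commutatorElement_def]; group
  have hsub : (u * v : A) - v * u = (u - 1) * (v - 1) - (v - 1) * (u - 1) := by noncomm_ring
  rw [hdist, Subtype.dist_eq, dist_eq_norm, Submonoid.coe_mul, Submonoid.coe_mul, hsub,
    dist_one_eq_norm, dist_one_eq_norm]
  calc _ ≤ ‖((u : A) - 1) * (v - 1)‖ + ‖((v : A) - 1) * (u - 1)‖ := norm_sub_le _ _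
    _ ≤ ‖(u : A) - 1‖ * ‖(v : A) - 1‖ + ‖(v : A) - 1‖ * ‖(u : A) - 1‖ := by
      gcongr <;> exact norm_mul_le _ _
    _ = _ := by ring

lemma exists_three_le_dist_pow_one_sq {u : unitary A} (hu : u ≠ 1) :
    ∃ j : ℕ, 3 ≤ dist (u ^ j) 1 ^ 2 := by
  obtain ⟨z, hz, hz1⟩ : ∃ z ∈ spectrum ℂ (u : A), z ≠ 1 := by
    by_contra! h
    exact hu (Subtype.ext (CFC.eq_one_of_spectrum_subset_one (R := ℂ) (u : A) h))
  obtain ⟨j, hj⟩ :=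
    Complex.exists_pow_re_le_neg_half (spectrum.norm_eq_one_of_unitary u.prop hz) hz1
  have := two_mul_one_sub_le_norm_sub_one_sq (pow_mem u.prop j) (spectrum.pow_mem_pow _ j hz)
  refine ⟨j, ?_⟩
  rw [dist_one_eq_norm, SubmonoidClass.coe_pow]
  linarith

lemma commute_of_commute_commutatorElement_right {u v : unitary A} (hu : dist u 1 < 2 / 5)
    (h : Commute ⁅u, v⁆ v) : Commute u v := by
  rw [← commutatorElement_eq_one_iff_commute]
  by_contra hne
  obtain ⟨j, hj⟩ := exists_three_le_dist_pow_one_sq hne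
  have : dist (⁅u, v⁆ ^ j) 1 ≤ 8 / 5 := by
    rw [← commutatorElement_pow_right_of_commute h]
    calc dist ⁅u, v ^ j⁆ 1 ≤ 2 * dist u 1 * dist (v ^ j) 1 := dist_commutatorElement_one_le _ _
    _ ≤ 2 * (2 / 5) * 2 := by gcongr; exact dist_one_le_two _
    _ = 8 / 5 := by norm_num
  nlinarith [dist_nonneg (x := ⁅u, v⁆ ^ j) (y := 1)]

end Unitary

namespace MonoidHom

variable {G M : Type*} [Group G] [Group M]

lemma commute_of_mem_closure (f : G →* M) {s : Set G}
    (hs : ∀ x ∈ s, ∀ y ∈ s, Commute (f x) (f y)) {x y : G}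
    (hx : x ∈ Subgroup.closure s) (hy : y ∈ Subgroup.closure s) : Commute (f x) (f y) := by
  induction hx, hy using Subgroup.closure_induction₂ with
  | mem x y hx hy => exact hs x hx y hy
  | one_left => simp only [map_one]; exact Commute.one_left _
  | one_right => simp only [map_one]; exact Commute.one_right _
  | mul_left _ _ _ _ _ _ h₁ h₂ => simp only [map_mul]; exact h₁.mul_left h₂
  | mul_right _ _ _ _ _ _ h₁ h₂ => simp only [map_mul]; exact h₁.mul_right h₂
  | inv_left _ _ _ _ h => simp only [map_inv]; exact h.inv_left
  | inv_right _ _ _ _ h => simp only [map_inv]; exact h.inv_right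

lemma eq_one_of_commute_of_commutator_eq_top (f : G →* M) (hG : commutator G = ⊤)
    (hf : ∀ x y, Commute (f x) (f y)) : f = 1 := by
  have hker : commutator G ≤ f.ker := by
    rw [commutator_def, Subgroup.commutator_le]
    intro x _ y _
    rw [mem_ker, map_commutatorElement, commutatorElement_eq_one_iff_commute]
    exact hf x y
  ext g
  exact hker (hG ▸ Subgroup.mem_top g)

variable {A : Type*} [CStarAlgebra A] (f : G →* unitary A)

lemma commute_of_dist_one_lt [Finite G] {x y : G} (hx : dist (f x) 1 < 2 / 5)
    (hy : dist (f y) 1 < 2 / 5) : Commute (f x) (f y) := by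
  by_contra hxy
  obtain ⟨x, ⟨hx, hxy⟩, hmin⟩ := Set.exists_min_image
    {x | dist (f x) 1 < 2 / 5 ∧ ¬Commute (f x) (f y)} (fun x => dist (f x) 1)
    (Set.toFinite _) ⟨x, hx, hxy⟩
  have hx0 : 0 < dist (f x) 1 := dist_pos.mpr fun h => hxy (h ▸ Commute.one_left _)
  have hc : dist (f ⁅x, y⁆) 1 < dist (f x) 1 := by
    rw [map_commutatorElement]
    nlinarith [Unitary.dist_commutatorElement_one_le (f x) (f y), dist_nonneg (x := f y) (y := 1)]
  have hcy : Commute ⁅f x, f y⁆ (f y) := by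
    by_contra hcy
    rw [← map_commutatorElement] at hcy
    exact (hmin _ ⟨hc.trans hx, hcy⟩).not_gt hc
  exact hxy (Unitary.commute_of_commute_commutatorElement_right hx hcy)

lemma index_le_of_dist_one_lt_mem [Finite G] [FiniteDimensional ℝ A] {H : Subgroup G}
    (hH : ∀ g, dist (f g) 1 < 2 / 5 → g ∈ H) : H.index ≤ 6 ^ finrank ℝ A := by
  have : Fintype (G ⧸ H) := Fintype.ofFinite _
  have hsep : Pairwise fun q₁ q₂ : G ⧸ H =>
      2 / 5 ≤ dist (f q₁.out : A) (f q₂.out : A) := by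
    intro q₁ q₂ hq
    by_contra hlt
    refine hq (q₂.out_eq ▸ q₁.out_eq ▸ QuotientGroup.eq.mpr (hH _ ?_))
    rwa [map_mul, map_inv, Unitary.dist_inv_mul_one, dist_comm, ← not_le]
  have hnorm (q : G ⧸ H) : ‖(f q.out : A)‖ ≤ 1 := by
    rcases subsingleton_or_nontrivial A
    · simp [Subsingleton.elim (f q.out : A) 0]
    · exact (CStarRing.norm_coe_unitary _).le
  have := card_le_of_norm_le_one_of_separated (by norm_num) hnorm hsep
  rw [show (1 + 2 / (2 / 5) : ℝ) = 6 by norm_num] at this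
  rw [Subgroup.index_eq_card, Nat.card_eq_fintype_card]
  exact_mod_cast this

theorem exists_normal_commute_index_le [Finite G] [FiniteDimensional ℝ A] :
    ∃ N : Subgroup G, N.Normal ∧ (∀ x ∈ N, ∀ y ∈ N, Commute (f x) (f y)) ∧
      N.index ≤ 6 ^ finrank ℝ A := by
  set S : Set G := {g | dist (f g) 1 < 2 / 5}
  refine ⟨Subgroup.normalClosure S, inferInstance, fun x hx y hy => ?_,
    f.index_le_of_dist_one_lt_mem fun g hg => Subgroup.subset_normalClosure hg⟩
  have hconj : Group.conjugatesOfSet S ⊆ S := by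
    intro a ha
    obtain ⟨s, hs, hsa⟩ := Group.mem_conjugatesOfSet_iff.mp ha
    obtain ⟨c, rfl⟩ := isConj_iff.mp hsa
    simpa [S, Unitary.dist_conj_one] using hs
  exact f.commute_of_mem_closure (fun a ha b hb => f.commute_of_dist_one_lt (hconj ha) (hconj hb))
    hx hy

end MonoidHom

lemma sqrt_log_div_two_lt {m d : ℕ} (hd : 0 < d) (hm : m ≤ 6 ^ (d * d * 2)) :
    √(Real.log m) / 2 < d := by
  have hlog6 : Real.log 6 < 2 := by
    rw [Real.log_lt_iff_lt_exp (by norm_num), show (2 : ℝ) = 1 + 1 by norm_num, exp_add]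
    nlinarith [exp_one_gt_d9]
  have hlog : Real.log m < (2 * d) ^ 2 := by
    rcases m.eq_zero_or_pos with rfl | hm0
    · simp only [CharP.cast_eq_zero, Real.log_zero]; positivity
    · calc Real.log m ≤ Real.log ((6 : ℝ) ^ (d * d * 2)) :=
            Real.log_le_log (by positivity) (by exact_mod_cast hm)
      _ = (d * d * 2 : ℕ) * Real.log 6 := Real.log_pow _ _
      _ < (d * d * 2 : ℕ) * 2 := mul_lt_mul_of_pos_left hlog6 (by positivity)
      _ = (2 * d) ^ 2 := by push_cast; ring
  rw [div_lt_iff₀ two_pos, mul_comm]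
  exact (Real.sqrt_lt' (by positivity)).mpr hlog

open scoped Matrix.Norms.L2Operator in
theorem stmt11_general {G : Type*} [Group G] [Fintype G] (m : ℕ)
    (hperf : commutator G = ⊤)
    (hindex : ∀ N : Subgroup G, N.Normal → N ≠ ⊤ → m ≤ N.index) :
    ∀ (d : ℕ) (ρ : G →* Matrix.unitaryGroup (Fin d) ℂ), ρ ≠ 1 →
      Real.sqrt (Real.log m) / 2 < d := by
  intro d ρ hρ
  have hd : 0 < d := Nat.pos_of_ne_zero fun hd => hρ (by subst hd; ext g i; exact i.elim0)
  obtain ⟨N, hN, hcomm, hNindex⟩ := ρ.exists_normal_commute_index_le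
  have hNtop : N ≠ ⊤ := fun hN => hρ <| ρ.eq_one_of_commute_of_commutator_eq_top hperf
    fun x y => hcomm x (hN ▸ Subgroup.mem_top x) y (hN ▸ Subgroup.mem_top y)
  refine sqrt_log_div_two_lt hd ((hindex N hN hNtop).trans ?_)
  simpa [finrank_matrix] using hNindex

theorem stmt11 {G : Type*} [Group G] [Fintype G] (m : ℕ) (hm : 1 ≤ m)
    (hperf : commutator G = ⊤)
    (hindex : ∀ N : Subgroup G, N.Normal → N ≠ ⊤ → m ≤ N.index) :
    ∀ (d : ℕ) (ρ : G →* Matrix.unitaryGroup (Fin d) ℂ), ρ ≠ 1 →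
      Real.sqrt (Real.log m) / 2 < d :=
  stmt11_general m hperf hindex
end
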